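/- For every x ∈ ℝ^n with x ≥ 0, the vector x is robust feasible for constraint i (i.e., Σ_{j∈J} ā_{ij} x_j + DEV_i(x) ≤ b_i) if and only if Σ_{j∈J} ā_{ij} x_j − c*_i(x) ≤ b_i, where c*_i(x) is the minimum cost of a feasible integral flow of value n in the instance (G,c)^i_x. -/

import Mathlib

open Finset

/-- The band index set `K = {K⁻, …, -1, 0, 1, …, K⁺}`. -/
noncomputable def bands (Km Kp : ℤ) : Finset ℤ := Finset.Icc Km Kp

/-- `Y_i`: the set of feasible 0-1 deviation assignments. -/
def memY (n : ℕ) (Km Kp : ℤ) (l u : ℤ → ℕ) (y : Fin n → ℤ → ℕ) : Prop :=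
  (∀ j : Fin n, ∀ k ∈ bands Km Kp, y j k ≤ 1) ∧
  (∀ k ∈ bands Km Kp, l k ≤ ∑ j : Fin n, y j k ∧ ∑ j : Fin n, y j k ≤ u k) ∧
  (∀ j : Fin n, ∑ k ∈ bands Km Kp, y j k ≤ 1)

/-- `Ȳ_i`: feasible deviation assignments distributing all `n` coefficients among the bands. -/
def memYbar (n : ℕ) (Km Kp : ℤ) (l u : ℤ → ℕ) (y : Fin n → ℤ → ℕ) : Prop :=
  memY n Km Kp l u y ∧ ∑ j : Fin n, ∑ k ∈ bands Km Kp, y j k = n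

/-- A feasible integral flow of value `n` in the min-cost flow instance `(G,c)ⁱₓ`:
`fs j` is the flow on arc `(s, v_j)` (bounds `[0,1]`), `fm j k` is the flow on arc
`(v_j, w_k)` (bounds `[0,1]`), and `ft k` is the flow on arc `(w_k, t)` (bounds `[l_k, u_k]`);
flow conservation holds at every vertex `v_j` and `w_k`, and the flow value is `n`. -/
def IsFlow (n : ℕ) (Km Kp : ℤ) (l u : ℤ → ℕ)
    (fs : Fin n → ℕ) (fm : Fin n → ℤ → ℕ) (ft : ℤ → ℕ) : Prop :=
  (∀ j : Fin n, fs j ≤ 1) ∧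
  (∀ j : Fin n, ∀ k ∈ bands Km Kp, fm j k ≤ 1) ∧
  (∀ k ∈ bands Km Kp, l k ≤ ft k ∧ ft k ≤ u k) ∧
  (∀ j : Fin n, fs j = ∑ k ∈ bands Km Kp, fm j k) ∧
  (∀ k ∈ bands Km Kp, ∑ j : Fin n, fm j k = ft k) ∧
  (∑ j : Fin n, fs j = n)

/-- The cost `c(f) = ∑_j ∑_k (-d^k_{ij} x_j) f(v_j, w_k)` of a flow (only the middle arcs
have nonzero cost). -/
noncomputable def flowCost (n : ℕ) (Km Kp : ℤ) (d : Fin n → ℤ → ℝ) (x : Fin n → ℝ)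
    (fm : Fin n → ℤ → ℕ) : ℝ :=
  ∑ j : Fin n, ∑ k ∈ bands Km Kp, -(d j k * x j) * (fm j k : ℝ)

/-!
A flow of value `n` saturates every arc `(s, v_j)`, so its middle arcs form an assignment in
`Y_i` of deviation `-c(f)`. Conversely an assignment `y ∈ Y_i` becomes such a flow by sending every
coefficient left unassigned by `y` to the band `0`: since `u_0 = n` this respects the capacity of
`(w_0, t)`, and since `d^0 = 0` it does not change the deviation. Hence `DEV_i(x) = -c*_i(x)`.
-/

noncomputable def deviation (n : ℕ) (Km Kp : ℤ) (d : Fin n → ℤ → ℝ) (x : Fin n → ℝ)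
    (y : Fin n → ℤ → ℕ) : ℝ :=
  ∑ j : Fin n, ∑ k ∈ bands Km Kp, d j k * x j * (y j k : ℝ)

section

variable {n : ℕ} {Km Kp : ℤ} {l u : ℤ → ℕ}

theorem flowCost_eq_neg_deviation (d : Fin n → ℤ → ℝ) (x : Fin n → ℝ) (fm : Fin n → ℤ → ℕ) :
    flowCost n Km Kp d x fm = -deviation n Km Kp d x fm := by
  simp only [flowCost, deviation, neg_mul, Finset.sum_neg_distrib]

theorem IsFlow.memY {fs : Fin n → ℕ} {fm : Fin n → ℤ → ℕ} {ft : ℤ → ℕ}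
    (hf : IsFlow n Km Kp l u fs fm ft) : memY n Km Kp l u fm := by
  obtain ⟨hfs, hfm, hft, hv, hw, -⟩ := hf
  refine ⟨hfm, fun k hk => ?_, fun j => hv j ▸ hfs j⟩
  rw [hw k hk]
  exact hft k hk

variable (Km Kp)

noncomputable def padToZero (y : Fin n → ℤ → ℕ) : Fin n → ℤ → ℕ :=
  fun j k => y j k + if k = 0 then 1 - ∑ k' ∈ bands Km Kp, y j k' else 0

variable {Km Kp}

theorem padToZero_of_ne_zero (y : Fin n → ℤ → ℕ) (j : Fin n) {k : ℤ} (hk : k ≠ 0) :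
    padToZero Km Kp y j k = y j k := by
  simp [padToZero, hk]

theorem sum_padToZero_eq_one (h0 : (0 : ℤ) ∈ bands Km Kp) {y : Fin n → ℤ → ℕ}
    (hy : memY n Km Kp l u y) (j : Fin n) : ∑ k ∈ bands Km Kp, padToZero Km Kp y j k = 1 := by
  simp only [padToZero]
  rw [Finset.sum_add_distrib, Finset.sum_ite_eq' _ (0 : ℤ), if_pos h0]
  have := hy.2.2 j
  omega

theorem padToZero_le_one (h0 : (0 : ℤ) ∈ bands Km Kp) {y : Fin n → ℤ → ℕ}
    (hy : memY n Km Kp l u y) (j : Fin n) {k : ℤ} (hk : k ∈ bands Km Kp) :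
    padToZero Km Kp y j k ≤ 1 :=
  (Finset.single_le_sum (fun _ _ => Nat.zero_le _) hk).trans (sum_padToZero_eq_one h0 hy j).le

theorem memY.isFlow_padToZero (h0 : (0 : ℤ) ∈ bands Km Kp) (hu0 : u 0 = n)
    {y : Fin n → ℤ → ℕ} (hy : memY n Km Kp l u y) :
    IsFlow n Km Kp l u (fun _ => 1) (padToZero Km Kp y)
      (fun k => ∑ j : Fin n, padToZero Km Kp y j k) := by
  refine ⟨fun _ => le_rfl, fun j k hk => padToZero_le_one h0 hy j hk, fun k hk => ⟨?_, ?_⟩,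
    fun j => (sum_padToZero_eq_one h0 hy j).symm, fun _ _ => rfl, by simp⟩
  · exact (hy.2.1 k hk).1.trans (Finset.sum_le_sum fun j _ => Nat.le_add_right _ _)
  · by_cases hk0 : k = 0
    · subst hk0
      calc ∑ j : Fin n, padToZero Km Kp y j 0 ≤ ∑ _j : Fin n, 1 :=
            Finset.sum_le_sum fun j _ => padToZero_le_one h0 hy j h0
        _ = u 0 := by simp [hu0]
    · simp only [padToZero_of_ne_zero y _ hk0]
      exact (hy.2.1 k hk).2

theorem deviation_padToZero {d : Fin n → ℤ → ℝ} (hd0 : ∀ j, d j 0 = 0) (x : Fin n → ℝ)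
    (y : Fin n → ℤ → ℕ) :
    deviation n Km Kp d x (padToZero Km Kp y) = deviation n Km Kp d x y := by
  refine Finset.sum_congr rfl fun j _ => Finset.sum_congr rfl fun k _ => ?_
  by_cases hk0 : k = 0
  · simp [hk0, hd0 j]
  · rw [padToZero_of_ne_zero y j hk0]

end

theorem stmt_12_general (n : ℕ) (Km Kp : ℤ) (hKm : Km < 0) (hKp : 0 < Kp)
    (a : Fin n → ℝ) (b : ℝ)
    (d : Fin n → ℤ → ℝ) (hd0 : ∀ j : Fin n, d j 0 = 0)
    (l u : ℤ → ℕ)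
    (hu0 : u 0 = n)
    (x : Fin n → ℝ)
    (D cstar : ℝ)
    (hD : IsGreatest {v : ℝ | ∃ y : Fin n → ℤ → ℕ, memY n Km Kp l u y ∧
      v = ∑ j : Fin n, ∑ k ∈ bands Km Kp, d j k * x j * (y j k : ℝ)} D)
    (hcstar : IsLeast {c : ℝ | ∃ (fs : Fin n → ℕ) (fm : Fin n → ℤ → ℕ) (ft : ℤ → ℕ),
      IsFlow n Km Kp l u fs fm ft ∧ c = flowCost n Km Kp d x fm} cstar) :
    (∑ j : Fin n, a j * x j + D ≤ b) ↔ (∑ j : Fin n, a j * x j - cstar ≤ b) := by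
  have h0 : (0 : ℤ) ∈ bands Km Kp := by
    simp only [bands, Finset.mem_Icc]
    omega
  have hDeq : D = -cstar := by
    apply le_antisymm
    · obtain ⟨y, hy, rfl⟩ := hD.1
      refine le_neg_of_le_neg (hcstar.2 ⟨_, _, _, hy.isFlow_padToZero h0 hu0, ?_⟩)
      rw [flowCost_eq_neg_deviation, deviation_padToZero hd0]
      rfl
    · obtain ⟨fs, fm, ft, hf, rfl⟩ := hcstar.1
      exact hD.2 ⟨fm, hf.memY, by rw [flowCost_eq_neg_deviation, neg_neg]; rfl⟩
  rw [hDeq, ← sub_eq_add_neg]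

/-- for every `x ≥ 0`, `x` is robust feasible for constraint `i`
(`∑_j ā_{ij} x_j + DEV_i(x) ≤ b_i`, where `DEV_i(x)` is the attained maximum deviation over
`Y_i`) iff `∑_j ā_{ij} x_j - c*_i(x) ≤ b_i`, where `c*_i(x)` is the minimum cost of a feasible
integral flow of value `n` in `(G,c)ⁱₓ`. -/
theorem stmt_12 (n : ℕ) (hn : 0 < n) (Km Kp : ℤ) (hKm : Km < 0) (hKp : 0 < Kp)
    (a : Fin n → ℝ) (b : ℝ)
    (d : Fin n → ℤ → ℝ) (hd0 : ∀ j : Fin n, d j 0 = 0)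
    (l u : ℤ → ℕ)
    (hlu : ∀ k ∈ bands Km Kp, l k ≤ u k)
    (hun : ∀ k ∈ bands Km Kp, u k ≤ n)
    (hu0 : u 0 = n)
    (hl : ∑ k ∈ bands Km Kp, l k ≤ n)
    (x : Fin n → ℝ) (hx : ∀ j, 0 ≤ x j)
    (D cstar : ℝ)
    (hD : IsGreatest {v : ℝ | ∃ y : Fin n → ℤ → ℕ, memY n Km Kp l u y ∧
      v = ∑ j : Fin n, ∑ k ∈ bands Km Kp, d j k * x j * (y j k : ℝ)} D)
    (hcstar : IsLeast {c : ℝ | ∃ (fs : Fin n → ℕ) (fm : Fin n → ℤ → ℕ) (ft : ℤ → ℕ),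
      IsFlow n Km Kp l u fs fm ft ∧ c = flowCost n Km Kp d x fm} cstar) :
    (∑ j : Fin n, a j * x j + D ≤ b) ↔ (∑ j : Fin n, a j * x j - cstar ≤ b) :=
  stmt_12_general n Km Kp hKm hKp a b d hd0 l u hu0 x D cstar hD hcstar
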